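/- arXiv:2302.02163 — 3 statements merged into one kernel-verified Lean document; each statement's English description precedes it below -/
import Mathlib

section
/- After any run of the rank initializer ranking a set M of messages, the function rank_Msgs restricted to M is an injective map onto {1, ..., |M|}, and for every variable x with some ranked message, rank_Vars(x) = min { rank_Msgs(x, v) : (x, v) ∈ M }. -/
/-- The registers manipulated by the rank initializer: a rank for each
message `(x, v) ∈ Vars × Dom`, a rank for each variable, and the auxiliary
register `rank_nxt` holding the next rank to be assigned.  Rank `0` means
"unranked". -/
structure RankState (Vars Dom : Type) where
  rankM : Vars × Dom → ℕ
  rankV : Vars → ℕ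
  nxt : ℕ

/-- Initially all rank registers are `0` and `rank_nxt = 1`. -/
def RankState.initial (Vars Dom : Type) : RankState Vars Dom :=
  ⟨fun _ => 0, fun _ => 0, 1⟩

/-- One iteration of the rank initializer: pick an unranked message `m`,
assign it the current rank `rank_nxt`, assign `rank_nxt` also to the variable
of `m` if that variable is still unranked, and increment `rank_nxt`. -/
def RankStep {Vars Dom : Type} [DecidableEq Vars] [DecidableEq Dom]
    (s t : RankState Vars Dom) : Prop :=
  ∃ m : Vars × Dom, s.rankM m = 0 ∧
    t.rankM = Function.update s.rankM m s.nxt ∧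
    t.rankV = (if s.rankV m.1 = 0 then Function.update s.rankV m.1 s.nxt
               else s.rankV) ∧
    t.nxt = s.nxt + 1

/-!
Ranks are handed out as `1, 2, 3, …`, so after a run the ranked messages are numbered
bijectively by `[1, nxt)`. Each new rank exceeds all earlier ones, hence the first rank a
variable receives stays the minimum over its ranked messages; this is the invariant
`RankState.Inv`, preserved by every step.
-/

open Function Set

theorem Set.bijOn_update_insert {α β : Type*} [DecidableEq α] {f : α → β} {s : Set α}
    {t : Set β} {a : α} {b : β} (h : BijOn f s t) (ha : a ∉ s) (hb : b ∉ t) :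
    BijOn (update f a b) (insert a s) (insert b t) := by
  have hf : EqOn (update f a b) f s := fun x hx => update_of_ne (ne_of_mem_of_not_mem hx ha) ..
  simpa using (h.congr hf.symm).insert (a := a) (by simpa using hb)

/-- Since `sInf ∅ = 0` in `ℕ`, the test `sInf S = 0` detects `S = ∅` when `0 ∉ S`. -/
theorem Nat.sInf_insert_of_forall_lt {S : Set ℕ} {a : ℕ} (h0 : 0 ∉ S)
    (ha : ∀ b ∈ S, b < a) :
    sInf (insert a S) = if sInf S = 0 then a else sInf S := by
  rcases S.eq_empty_or_nonempty with rfl | hne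
  · simp
  have hmem := Nat.sInf_mem hne
  rw [if_neg (ne_of_mem_of_not_mem hmem h0), csInf_insert (OrderBot.bddBelow S) hne,
    min_eq_right (ha _ hmem).le]

section Ranks

variable {Vars Dom : Type}

def ranksAt (r : Vars × Dom → ℕ) (x : Vars) : Set ℕ :=
  {n | ∃ v, (x, v) ∈ support r ∧ r (x, v) = n}

variable [DecidableEq Vars] [DecidableEq Dom] {r : Vars × Dom → ℕ} {m : Vars × Dom} {b : ℕ}

theorem ranksAt_update_of_ne {x : Vars} (hx : x ≠ m.1) :
    ranksAt (update r m b) x = ranksAt r x := by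
  have h : ∀ v, update r m b (x, v) = r (x, v) := fun v =>
    update_of_ne (fun h => hx (congrArg Prod.fst h)) ..
  simp only [ranksAt, mem_support, h]

theorem ranksAt_update_self (hm : r m = 0) (hb : b ≠ 0) :
    ranksAt (update r m b) m.1 = insert b (ranksAt r m.1) := by
  ext n
  simp only [ranksAt, mem_support, mem_insert_iff, mem_ofPred_eq, update_apply]
  grind

end Ranks

/-- `ranksAt s.rankM x = ∅` for a variable `x` with no ranked message, and then
`rankV_eq` says `s.rankV x = 0`. -/
structure RankState.Inv {Vars Dom : Type} (s : RankState Vars Dom) : Prop where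
  one_le_nxt : 1 ≤ s.nxt
  bijOn : BijOn s.rankM (support s.rankM) (Ico 1 s.nxt)
  rankV_eq : ∀ x, s.rankV x = sInf (ranksAt s.rankM x)

theorem RankState.Inv.initial (Vars Dom : Type) : (RankState.initial Vars Dom).Inv where
  one_le_nxt := le_rfl
  bijOn := by simp [RankState.initial]
  rankV_eq x := by simp [RankState.initial, ranksAt]

theorem RankState.Inv.step {Vars Dom : Type} [DecidableEq Vars] [DecidableEq Dom]
    {s t : RankState Vars Dom} (hs : s.Inv) (h : RankStep s t) : t.Inv := by
  obtain ⟨m, hm, hM, hV, hn⟩ := h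
  obtain ⟨rankM, rankV, nxt⟩ := t
  dsimp only at hM hV hn
  subst hM hV hn
  have hnxt : s.nxt ≠ 0 := Nat.one_le_iff_ne_zero.mp hs.one_le_nxt
  refine ⟨Nat.le_succ_of_le hs.one_le_nxt, ?_, fun x => ?_⟩
  · rw [support_update_of_ne_zero _ _ hnxt, Ico_add_one_right_eq_Icc,
      ← Ico_insert_right hs.one_le_nxt]
    exact bijOn_update_insert hs.bijOn (by simpa using hm) (by simp)
  by_cases hx : x = m.1
  · subst hx
    have hlt : ∀ n ∈ ranksAt s.rankM m.1, n ∈ Ico 1 s.nxt := by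
      rintro n ⟨v, hv, rfl⟩; exact hs.bijOn.mapsTo hv
    rw [ranksAt_update_self hm hnxt,
      Nat.sInf_insert_of_forall_lt (fun h0 => by simpa using hlt 0 h0) (fun n hn => (hlt n hn).2),
      ← hs.rankV_eq]
    split_ifs <;> simp
  · rw [ranksAt_update_of_ne hx, ← hs.rankV_eq]
    split_ifs <;> simp [update_of_ne hx]

theorem RankState.Inv.of_run {Vars Dom : Type} [DecidableEq Vars] [DecidableEq Dom]
    {s : RankState Vars Dom}
    (h : Relation.ReflTransGen RankStep (RankState.initial Vars Dom) s) : s.Inv := by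
  induction h with
  | refl => exact .initial Vars Dom
  | tail _ hstep ih => exact ih.step hstep

/-- After any run of the rank initializer, let `M` be the set of ranked
messages.  Then `rank_Msgs` restricted to `M` is an injection onto
`{1, …, |M|}`, and for every variable `x` with some ranked message,
`rank_Vars(x)` is the minimum of the ranks of the ranked messages on `x`. -/
theorem rank_initializer_run_ranks
    {Vars Dom : Type} [Fintype Vars] [DecidableEq Vars]
    [Fintype Dom] [DecidableEq Dom] (s : RankState Vars Dom)
    (h : Relation.ReflTransGen RankStep (RankState.initial Vars Dom) s)
    (M : Finset (Vars × Dom)) (hM : M = {m | s.rankM m ≠ 0}) :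
    Set.BijOn s.rankM ↑M (Set.Icc 1 M.card) ∧
    ∀ x : Vars, (∃ v, (x, v) ∈ M) →
      s.rankV x = sInf {n | ∃ v, (x, v) ∈ M ∧ s.rankM (x, v) = n} := by
  have inv := RankState.Inv.of_run h
  have hM' : (M : Set (Vars × Dom)) = support s.rankM := hM
  have hcard : M.card + 1 = s.nxt := by
    have := inv.bijOn.ncard_eq
    rw [← hM', ncard_coe_finset, ncard_Ico_nat] at this
    have := inv.one_le_nxt
    omega
  refine ⟨?_, fun x _ => ?_⟩
  · rw [hM', ← Ico_add_one_right_eq_Icc, hcard]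
    exact inv.bijOn
  · simp only [← Finset.mem_coe, hM']
    exact inv.rankV_eq x
end

section
/- In the TSO simulation of a register machine, the verifier's check forces an unchanged memory: if in a run reaching q_final the verifier reads the initial value from every register-variable after the flag x_s is set, and the flag x_s is set only after the simulator reached q_target, then at the moment the verifier completes its checks, no write by any process to a register-variable has been propagated to shared memory before the verifier's corresponding read. -/
/-- Process instructions: write a value to a shared variable or read a value
from it. -/
inductive PAct (X : Type) where
  | write (x : X) (v : ℕ) : PAct X
  | read (x : X) (v : ℕ) : PAct X

/-- A TSO configuration: shared memory, one FIFO store buffer per process,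
and a local state per process. -/
structure TSOConf (P X Q : Type) where
  mem : X → ℕ
  buf : P → List (X × ℕ)
  st : P → Q

/-- Labels of TSO steps: a process performs an instruction, or the oldest
buffered write of a process is propagated to shared memory. -/
inductive TSOLbl (P X : Type) where
  | act (p : P) (a : PAct X) : TSOLbl P X
  | flush (p : P) (x : X) (v : ℕ) : TSOLbl P X

/-- The most recent buffered write of a buffer on variable `x`, if any. -/
def bufVal {X : Type} [DecidableEq X] (buf : List (X × ℕ)) (x : X) : Option ℕ :=
  (buf.reverse.find? (fun q => decide (q.1 = x))).map Prod.snd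

/-- TSO small-step semantics for a program `prog` (shared by all processes):
writes are appended to the writer's buffer; buffered writes are
nondeterministically propagated (in FIFO order) to shared memory; a read
returns the latest buffered write of the reading process on that variable if
one exists, otherwise the shared-memory value. -/
inductive TSOStep {P X Q : Type} [DecidableEq P] [DecidableEq X]
    (prog : Q → PAct X → Q → Prop) :
    TSOLbl P X → TSOConf P X Q → TSOConf P X Q → Prop
  | write {c : TSOConf P X Q} {p x v q'} :
      prog (c.st p) (.write x v) q' →
      TSOStep prog (.act p (.write x v)) c
        ⟨c.mem, Function.update c.buf p (c.buf p ++ [(x, v)]),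
          Function.update c.st p q'⟩
  | flush {c : TSOConf P X Q} {p x v rest} :
      c.buf p = (x, v) :: rest →
      TSOStep prog (.flush p x v) c
        ⟨Function.update c.mem x v, Function.update c.buf p rest, c.st⟩
  | read {c : TSOConf P X Q} {p x v q'} :
      prog (c.st p) (.read x v) q' →
      (bufVal (c.buf p) x = some v ∨
        (bufVal (c.buf p) x = none ∧ c.mem x = v)) →
      TSOStep prog (.act p (.read x v)) c
        ⟨c.mem, c.buf, Function.update c.st p q'⟩

/-
Every buffered entry, and hence every value that can reach shared memory, comes from a program
write; so a property `W x v` enjoyed by all program writes holds of every buffer entry of a run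
from empty buffers, and once `W x (mem x)` holds it survives every later step. Taking
`W x v := RegVar x → v ≠ 0`, a flush to a register-variable makes its memory value nonzero for
good, which contradicts the verifier later reading `0` from memory.
-/

namespace TSOStep

variable {P X Q : Type} [DecidableEq P] [DecidableEq X] {prog : Q → PAct X → Q → Prop}
  {lbl : TSOLbl P X} {c c' : TSOConf P X Q}

theorem mem_buf_of_mem_buf (h : TSOStep prog lbl c c') {p : P} {x : X} {v : ℕ}
    (hmem : (x, v) ∈ c'.buf p) : (x, v) ∈ c.buf p ∨ ∃ q q', prog q (.write x v) q' := by
  cases h with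
  | @write _ p' x' v' q' hprog =>
    by_cases hp : p = p'
    · subst hp
      simp only [Function.update_self, List.mem_append, List.mem_singleton,
        Prod.mk.injEq] at hmem
      rcases hmem with hold | ⟨rfl, rfl⟩
      · exact .inl hold
      · exact .inr ⟨_, _, hprog⟩
    · exact .inl (by simpa [Function.update_of_ne hp] using hmem)
  | @flush _ p' x' v' rest hbuf =>
    by_cases hp : p = p'
    · subst hp
      simp only [Function.update_self] at hmem
      exact .inl (hbuf ▸ List.mem_cons_of_mem _ hmem)
    · exact .inl (by simpa [Function.update_of_ne hp] using hmem)
  | read => exact .inl hmem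

theorem mem_eq_or_mem_buf (h : TSOStep prog lbl c c') (x : X) :
    c'.mem x = c.mem x ∨ ∃ p, (x, c'.mem x) ∈ c.buf p := by
  cases h with
  | write => exact .inl rfl
  | @flush _ p x' v rest hbuf =>
    by_cases hx : x = x'
    · subst hx
      exact .inr ⟨p, by simp [hbuf]⟩
    · exact .inl (Function.update_of_ne hx _ _)
  | read => exact .inl rfl

theorem mem_buf_of_flush {p : P} {x : X} {v : ℕ} (h : TSOStep prog (.flush p x v) c c') :
    (x, v) ∈ c.buf p := by
  cases h with
  | flush hbuf => simp [hbuf]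

theorem mem_of_flush {p : P} {x : X} {v : ℕ} (h : TSOStep prog (.flush p x v) c c') :
    c'.mem x = v := by
  cases h with
  | flush => exact Function.update_self _ _ _

theorem mem_of_read {p : P} {x : X} {v : ℕ} (h : TSOStep prog (.act p (.read x v)) c c')
    (hbuf : bufVal (c.buf p) x = none) : c.mem x = v := by
  cases h with
  | read _ hval =>
    rcases hval with hsome | ⟨-, hmem⟩
    · simp [hbuf] at hsome
    · exact hmem

end TSOStep

section Run

variable {P X Q : Type} [DecidableEq P] [DecidableEq X] {prog : Q → PAct X → Q → Prop}
  {n : ℕ} {c : ℕ → TSOConf P X Q} {l : ℕ → TSOLbl P X} {W : X → ℕ → Prop}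

theorem buf_entries_of_run (hrun : ∀ i < n, TSOStep prog (l i) (c i) (c (i + 1)))
    (hbuf₀ : (c 0).buf = fun _ => []) (hW : ∀ q x v q', prog q (.write x v) q' → W x v)
    {k : ℕ} (hk : k ≤ n) {p : P} {x : X} {v : ℕ} (hmem : (x, v) ∈ (c k).buf p) : W x v := by
  induction k generalizing x v with
  | zero => simp [hbuf₀] at hmem
  | succ k ih =>
    rcases (hrun k hk).mem_buf_of_mem_buf hmem with hold | ⟨q, q', hprog⟩
    · exact ih (by omega) hold
    · exact hW q x v q' hprog

theorem mem_persists_of_run (hrun : ∀ i < n, TSOStep prog (l i) (c i) (c (i + 1)))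
    (hbuf₀ : (c 0).buf = fun _ => []) (hW : ∀ q x v q', prog q (.write x v) q' → W x v)
    {x : X} {j k : ℕ} (hjk : j ≤ k) (hk : k ≤ n) (hj : W x ((c j).mem x)) :
    W x ((c k).mem x) := by
  induction k, hjk using Nat.le_induction with
  | base => exact hj
  | succ k _ ih =>
    rcases (hrun k hk).mem_eq_or_mem_buf x with heq | ⟨p, hmem⟩
    · exact heq ▸ ih (by omega)
    · exact buf_entries_of_run hrun hbuf₀ hW (by omega) hmem

end Run

theorem verifier_forces_unchanged_memory_general
    {P X Q : Type} [DecidableEq P] [DecidableEq X]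
    (prog : Q → PAct X → Q → Prop)
    (RegVar : X → Prop) (ver : P)
    (n : ℕ) (c : ℕ → TSOConf P X Q) (l : ℕ → TSOLbl P X)
    (hrun : ∀ i < n, TSOStep prog (l i) (c i) (c (i + 1)))
    (hinit : (c 0).mem = (fun _ => 0) ∧ (c 0).buf = fun _ => [])
    (hwrites : ∀ q x v q', prog q (.write x v) q' → RegVar x → v ≠ 0)
    (is : ℕ) (ix : X → ℕ)
    (hreads : ∀ x, RegVar x →
      is < ix x ∧ ix x < n ∧ l (ix x) = .act ver (.read x 0) ∧
      bufVal ((c (ix x)).buf ver) x = none) :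
    ∀ x, RegVar x → ∀ j < ix x, ∀ p v, l j ≠ .flush p x v := by
  intro x hx j hj p v hflush
  obtain ⟨-, hixn, hread, hbuf⟩ := hreads x hx
  have hstep := hflush ▸ hrun j (by omega)
  have hflushed : RegVar x → (c (j + 1)).mem x ≠ 0 :=
    hstep.mem_of_flush ▸ buf_entries_of_run hrun hinit.2 hwrites (by omega) hstep.mem_buf_of_flush
  have hnonzero : (c (ix x)).mem x ≠ 0 :=
    mem_persists_of_run hrun hinit.2 hwrites (by omega) hixn.le hflushed hx
  exact hnonzero ((hread ▸ hrun (ix x) hixn).mem_of_read hbuf)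

/-- The verifier's check forces an unchanged memory.  Consider a run of `n`
TSO steps from the all-zero initial configuration that reaches `q_final` in
the simulator process.  Suppose every program write to a register-variable
writes a non-initial (nonzero) value, the flag `x_s` is set only after the
simulator has reached `q_target`, and after `x_s` is set the verifier reads
the initial value `0` from each register-variable (from shared memory, its
buffer containing no write to that variable).  Then at the moment the
verifier completes its checks, no write by any process to a register-variable
has been propagated to shared memory before the verifier's corresponding
read. -/
theorem verifier_forces_unchanged_memory
    {P X Q : Type} [DecidableEq P] [DecidableEq X]
    (prog : Q → PAct X → Q → Prop)
    (RegVar : X → Prop) (xs : X) (sim ver : P) (qtarget qfinal : Q)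
    (n : ℕ) (c : ℕ → TSOConf P X Q) (l : ℕ → TSOLbl P X)
    (hrun : ∀ i < n, TSOStep prog (l i) (c i) (c (i + 1)))
    (hinit : (c 0).mem = (fun _ => 0) ∧ (c 0).buf = fun _ => [])
    (hfinal : (c n).st sim = qfinal)
    (hwrites : ∀ q x v q', prog q (.write x v) q' → RegVar x → v ≠ 0)
    (is : ℕ) (hs : ∃ p, l is = .flush p xs 1)
    (htarget : ∃ j ≤ is, (c j).st sim = qtarget)
    (ix : X → ℕ)
    (hreads : ∀ x, RegVar x →
      is < ix x ∧ ix x < n ∧ l (ix x) = .act ver (.read x 0) ∧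
      bufVal ((c (ix x)).buf ver) x = none) :
    ∀ x, RegVar x → ∀ j < ix x, ∀ p v, l j ≠ .flush p x v :=
  verifier_forces_unchanged_memory_general prog RegVar ver n c l hrun hinit hwrites is ix hreads
end

section
/- The read instruction simulation is sound: in the simulator register machine, a transition sequence implementing rd(x, d) from state q to q' can complete only if at its end either (i) lw(x) = d, or (ii) rank(x, d) < φ_P, φ_E ≥ φ_L(x), and φ_E ≥ rank(x, d), or (iii) d = d_init, lw(x) = 0, and rank_Vars(x) > φ_E. -/
/-- The registers of the simulator register machine. -/
inductive Reg (Vars Dom : Type) where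
  | lw (x : Vars) : Reg Vars Dom
  | rankVars (x : Vars) : Reg Vars Dom
  | phiL (x : Vars) : Reg Vars Dom
  | rankMsgs (m : Vars × Dom) : Reg Vars Dom
  | phiE : Reg Vars Dom
  | phiLmax : Reg Vars Dom
  | phiP : Reg Vars Dom
  | rankNxt : Reg Vars Dom
  deriving DecidableEq

/-- The control states of the gadget implementing `rd(x, d)`: `start = q`,
`done = q'`, intermediate states of path (b) and the auxiliary states raising
`φ_E`, and the intermediate state of path (c). -/
inductive GState where
  | start | s1 | s2 | m1 | m2 | s3 | done
  deriving DecidableEq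

/-- The simulator's implementation of the read instruction `rd(x, d)`, with
values encoded into `ℕ` by `enc` (and `0` denoting "no write yet"):
(a) a direct edge guarded by `lw(x) == d`;
(b) a path guarded by `rank(x, d) < φ_P` which then raises `φ_E` to at least
    `φ_L(x)` and then to at least `rank(x, d)` via `if φ_E < r then φ_E := r`;
(c) for `d = d_init` only, a path guarded by `lw(x) == 0` and
    `rank_Vars(x) > φ_E`. -/
inductive GStep {Vars Dom : Type} [DecidableEq Vars] [DecidableEq Dom]
    (x : Vars) (d dinit : Dom) (enc : Dom → ℕ) :
    GState × (Reg Vars Dom → ℕ) → GState × (Reg Vars Dom → ℕ) → Prop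
  | direct {ρ} : ρ (.lw x) = enc d →
      GStep x d dinit enc (.start, ρ) (.done, ρ)
  | guardP {ρ} : ρ (.rankMsgs (x, d)) < ρ .phiP →
      GStep x d dinit enc (.start, ρ) (.s1, ρ)
  | geL {ρ} : ρ .phiE ≥ ρ (.phiL x) →
      GStep x d dinit enc (.s1, ρ) (.s2, ρ)
  | ltL {ρ} : ρ .phiE < ρ (.phiL x) →
      GStep x d dinit enc (.s1, ρ) (.m1, ρ)
  | raiseL {ρ} :
      GStep x d dinit enc (.m1, ρ) (.s2, Function.update ρ .phiE (ρ (.phiL x)))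
  | geR {ρ} : ρ .phiE ≥ ρ (.rankMsgs (x, d)) →
      GStep x d dinit enc (.s2, ρ) (.done, ρ)
  | ltR {ρ} : ρ .phiE < ρ (.rankMsgs (x, d)) →
      GStep x d dinit enc (.s2, ρ) (.m2, ρ)
  | raiseR {ρ} :
      GStep x d dinit enc
        (.m2, ρ) (.done, Function.update ρ .phiE (ρ (.rankMsgs (x, d))))
  | initGuard {ρ} : d = dinit → ρ (.lw x) = 0 →
      GStep x d dinit enc (.start, ρ) (.s3, ρ)
  | initRead {ρ} : d = dinit → ρ (.rankVars x) > ρ .phiE →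
      GStep x d dinit enc (.s3, ρ) (.done, ρ)

/-! Every control state of the gadget records the guards passed on the way to it. The two
raising assignments write only `φ_E`, and only increase it, so every guard recorded earlier
survives them; at `q'` the recorded guards are one of the three alternatives. -/

def ReadSound {Vars Dom : Type} (x : Vars) (d dinit : Dom) (enc : Dom → ℕ)
    (ρ : Reg Vars Dom → ℕ) : Prop :=
  ρ (.lw x) = enc d ∨
  (ρ (.rankMsgs (x, d)) < ρ .phiP ∧ ρ .phiE ≥ ρ (.phiL x) ∧
    ρ .phiE ≥ ρ (.rankMsgs (x, d))) ∨
  (d = dinit ∧ ρ (.lw x) = 0 ∧ ρ (.rankVars x) > ρ .phiE)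

def GInv {Vars Dom : Type} (x : Vars) (d dinit : Dom) (enc : Dom → ℕ) :
    GState × (Reg Vars Dom → ℕ) → Prop
  | (.start, _) => True
  | (.s1, ρ) => ρ (.rankMsgs (x, d)) < ρ .phiP
  | (.m1, ρ) => ρ (.rankMsgs (x, d)) < ρ .phiP ∧ ρ .phiE < ρ (.phiL x)
  | (.s2, ρ) => ρ (.rankMsgs (x, d)) < ρ .phiP ∧ ρ .phiE ≥ ρ (.phiL x)
  | (.m2, ρ) => ρ (.rankMsgs (x, d)) < ρ .phiP ∧ ρ .phiE ≥ ρ (.phiL x) ∧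
      ρ .phiE < ρ (.rankMsgs (x, d))
  | (.s3, ρ) => d = dinit ∧ ρ (.lw x) = 0
  | (.done, ρ) => ReadSound x d dinit enc ρ

section

variable {Vars Dom : Type} [DecidableEq Vars] [DecidableEq Dom]
  {x : Vars} {d dinit : Dom} {enc : Dom → ℕ}

theorem GInv.step {p q : GState × (Reg Vars Dom → ℕ)} (hpq : GStep x d dinit enc p q)
    (hp : GInv x d dinit enc p) : GInv x d dinit enc q := by
  cases hpq with
  | direct h => exact Or.inl h
  | guardP h => exact h
  | geL h | ltL h => exact ⟨hp, h⟩
  | raiseL => exact ⟨by simpa using hp.1, by simp⟩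
  | geR h => exact Or.inr (Or.inl ⟨hp.1, hp.2, h⟩)
  | ltR h => exact ⟨hp.1, hp.2, h⟩
  | raiseR =>
    obtain ⟨hP, hL, hR⟩ := hp
    refine Or.inr (Or.inl ?_)
    simp only [ne_eq, reduceCtorEq, not_false_eq_true, Function.update_of_ne,
      Function.update_self]
    omega
  | initGuard hd hlw => exact ⟨hd, hlw⟩
  | initRead _ h => exact Or.inr (Or.inr ⟨hp.1, hp.2, h⟩)

theorem GInv.of_reachable {ρ : Reg Vars Dom → ℕ} {p : GState × (Reg Vars Dom → ℕ)}
    (h : Relation.ReflTransGen (GStep x d dinit enc) (.start, ρ) p) :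
    GInv x d dinit enc p := by
  induction h with
  | refl => trivial
  | tail _ hstep ih => exact ih.step hstep

end

theorem read_simulation_sound_general {Vars Dom : Type}
    [DecidableEq Vars] [DecidableEq Dom]
    (x : Vars) (d dinit : Dom) (enc : Dom → ℕ)
    (ρ ρ' : Reg Vars Dom → ℕ)
    (h : Relation.ReflTransGen (GStep x d dinit enc) (.start, ρ) (.done, ρ')) :
    ρ' (.lw x) = enc d ∨
    (ρ' (.rankMsgs (x, d)) < ρ' .phiP ∧ ρ' .phiE ≥ ρ' (.phiL x) ∧
      ρ' .phiE ≥ ρ' (.rankMsgs (x, d))) ∨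
    (d = dinit ∧ ρ' (.lw x) = 0 ∧ ρ' (.rankVars x) > ρ' .phiE) :=
  GInv.of_reachable h

/-- Soundness of the read-instruction simulation: a transition sequence
implementing `rd(x, d)` from `q` to `q'` can complete only if at its end
(i) `lw(x) = d`, or (ii) `rank(x, d) < φ_P`, `φ_E ≥ φ_L(x)` and
`φ_E ≥ rank(x, d)`, or (iii) `d = d_init`, `lw(x) = 0` and
`rank_Vars(x) > φ_E`. -/
theorem read_simulation_sound {Vars Dom : Type}
    [DecidableEq Vars] [DecidableEq Dom]
    (x : Vars) (d dinit : Dom) (enc : Dom → ℕ)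
    (hinj : Function.Injective enc) (hpos : ∀ v, enc v ≠ 0)
    (ρ ρ' : Reg Vars Dom → ℕ)
    (h : Relation.ReflTransGen (GStep x d dinit enc) (.start, ρ) (.done, ρ')) :
    ρ' (.lw x) = enc d ∨
    (ρ' (.rankMsgs (x, d)) < ρ' .phiP ∧ ρ' .phiE ≥ ρ' (.phiL x) ∧
      ρ' .phiE ≥ ρ' (.rankMsgs (x, d))) ∨
    (d = dinit ∧ ρ' (.lw x) = 0 ∧ ρ' (.rankVars x) > ρ' .phiE) :=
  read_simulation_sound_general x d dinit enc ρ ρ' h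
end
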